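/- Let S be the set of tuples (β_0,…,β_{k−1}) ∈ W^k satisfying the basic equations. Then S is a ℤ_p-submodule of W^k, the projection map S → W sending (β_0,…,β_{k−1}) to β_0 is injective, and its image is exactly the fixed set {x ∈ W : σ^m(x) = x}. In particular S is isomorphic as a ℤ_p-module to the ring of Witt vectors W(𝔽_{p^m}). -/

import Mathlib

noncomputable section

/-- The canonical ring map `ℤ_p → W(K)` for a `ZMod p`-algebra `K`: the identification
`ℤ_p ≅ W(𝔽_p)` followed by the functorial map `W(𝔽_p) → W(K)`, recorded as an algebra
structure. -/
instance padicIntAlgebraWitt (p : ℕ) [Fact p.Prime] (K : Type*) [CommRing K]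
    [Algebra (ZMod p) K] : Algebra ℤ_[p] (WittVector p K) :=
  ((WittVector.map (algebraMap (ZMod p) K)).comp
    (WittVector.equiv p).symm.toRingHom).toAlgebra

/-- The `m`-th power `σ^m` of the Witt vector Frobenius, as a ring homomorphism. -/
def frobPow (p : ℕ) [Fact p.Prime] (K : Type*) [CommRing K] : ℕ → (WittVector p K →+* WittVector p K)
  | 0 => RingHom.id _
  | m + 1 => WittVector.frobenius.comp (frobPow p K m)

/-- The alternating sum `e_i − e_{i+1} + e_{i+2} − ⋯ ± e_j`. -/
def altSum (e : ℕ → ℕ) (i j : ℕ) : ℤ :=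
  ∑ ℓ ∈ Finset.Icc i j, (-1 : ℤ) ^ (ℓ - i) * (e ℓ : ℤ)

/-- The basic equations for a tuple `(β_0, …, β_(k−1))` of Witt vectors (with the cyclic
convention `β_k = β_0`, realized by the wrap-around addition of `Fin k` with
`k = k' + 1`): `p^(e (2j−1)) · σ^(e (2j−1) + e (2j)) (β_(j−1)) = p^(e (2j)) · β_j` for
`j = 1, …, k`. -/
def BasicEq (p r k' : ℕ) [Fact p.Prime] (e : ℕ → ℕ)
    (β : Fin (k' + 1) → WittVector p (GaloisField p r)) : Prop :=
  ∀ j : Fin (k' + 1),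
    (p : WittVector p (GaloisField p r)) ^ (e (2 * (j : ℕ) + 1)) *
        frobPow p (GaloisField p r) (e (2 * (j : ℕ) + 1) + e (2 * (j : ℕ) + 2)) (β j)
      = (p : WittVector p (GaloisField p r)) ^ (e (2 * (j : ℕ) + 2)) * β (j + 1)

/-!
Write `a_j = A_{2j}` and `s_j = e_1 + ⋯ + e_{2j}`. Since `p` is a non-zero-divisor in `W`, the
`j`-th basic equation determines `β_j` from `β_{j-1}`, so by induction
`β_j = p^{a_j} σ^{s_j}(β_0)`. Closing the cycle (`a_k = 0`, `s_k = m`) leaves exactly the condition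
`σ^m(β_0) = β_0`; hence `S` is the image of the `σ^m`-fixed Witt vectors under an injective
`ℤ_p`-linear map. A Witt vector is `σ^m`-fixed iff its coordinates are roots of `X^{p^m} - X`, and
in `𝔽_q` these roots are exactly the image of an embedding `𝔽_{p^m} → 𝔽_q`, which already accounts
for `p^m` of them.
-/

open Polynomial in
theorem FiniteField.pow_natCard_eq_self_iff_mem_range {L K : Type*} [Field L] [Finite L]
    [Field K] (ι : L →+* K) (y : K) : y ^ Nat.card L = y ↔ y ∈ Set.range ι := by
  have := Fintype.ofFinite L
  rw [Nat.card_eq_fintype_card]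
  have hq : 1 < Fintype.card L := Fintype.one_lt_card
  have hroots : (X ^ Fintype.card L - X : K[X]).roots = Finset.univ.val.map ι := by
    rw [← FiniteField.roots_X_pow_card_sub_X,
      roots_map_of_injective_of_card_eq_natDegree ι.injective] <;>
      simp [FiniteField.roots_X_pow_card_sub_X, FiniteField.X_pow_card_sub_X_natDegree_eq _ hq]
  have hmem : y ∈ (X ^ Fintype.card L - X : K[X]).roots ↔ y ^ Fintype.card L = y := by
    simp [mem_roots (FiniteField.X_pow_card_sub_X_ne_zero K hq), sub_eq_zero]
  simp [← hmem, hroots]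

open Fin.NatCast in
theorem Fin.forall_apply_add_one_iff {α : Type*} {k : ℕ} (β : Fin (k + 1) → α)
    (P : ℕ → α → α → Prop) :
    (∀ j : Fin (k + 1), P j (β j) (β (j + 1))) ↔
      ∀ n ≤ k, P n (β (n : Fin (k + 1))) (β ((n + 1 : ℕ) : Fin (k + 1))) := by
  constructor
  · intro h n hn
    simpa [Fin.val_cast_of_lt (Nat.lt_succ_of_le hn)] using h n
  · intro h j
    simpa using h j (Nat.le_of_lt_succ j.2)

theorem WittVector.mem_range_map_iff {p : ℕ} [Fact p.Prime] {K K' : Type*} [CommRing K]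
    [CommRing K'] (ι : K' →+* K) (x : WittVector p K) :
    x ∈ Set.range (WittVector.map ι) ↔ ∀ i, x.coeff i ∈ Set.range ι := by
  constructor
  · rintro ⟨y, rfl⟩ i
    exact ⟨y.coeff i, (WittVector.map_coeff ι y i).symm⟩
  · intro hx
    choose z hz using hx
    exact ⟨WittVector.mk p z,
      WittVector.ext fun i => by rw [WittVector.map_coeff, WittVector.coeff_mk, hz]⟩

namespace BasicEquations

variable (p : ℕ) [Fact p.Prime]

local notation "𝕎" => WittVector p

section Frobenius

variable {K : Type*} [CommRing K]

theorem frobPow_eq_iterate (n : ℕ) (x : 𝕎 K) : frobPow p K n x = WittVector.frobenius^[n] x := by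
  induction n with
  | zero => rfl
  | succ n ih => rw [Function.iterate_succ_apply', ← ih]; rfl

theorem frobPow_add (a b : ℕ) (x : 𝕎 K) :
    frobPow p K (a + b) x = frobPow p K a (frobPow p K b x) := by
  simp only [frobPow_eq_iterate, Function.iterate_add_apply]

variable [CharP K p]

theorem coeff_frobPow (n i : ℕ) (x : 𝕎 K) : (frobPow p K n x).coeff i = x.coeff i ^ p ^ n := by
  rw [frobPow_eq_iterate, WittVector.iterate_frobenius_coeff]

variable [Algebra (ZMod p) K]

theorem frobPow_algebraMap (n : ℕ) (z : ℤ_[p]) :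
    frobPow p K n (algebraMap ℤ_[p] (𝕎 K) z) = algebraMap ℤ_[p] (𝕎 K) z := by
  ext i
  rw [coeff_frobPow]
  exact (map_pow _ _ _).symm.trans (congrArg _ (ZMod.pow_card_pow _))

variable (K) in
def frobPowAlgHom (n : ℕ) : 𝕎 K →ₐ[ℤ_[p]] 𝕎 K :=
  { frobPow p K n with commutes' := frobPow_algebraMap p n }

variable (K) in
def frobPowFixed (n : ℕ) : Submodule ℤ_[p] (𝕎 K) :=
  LinearMap.eqLocus (frobPowAlgHom p K n).toLinearMap LinearMap.id

theorem mem_frobPowFixed {n : ℕ} {x : 𝕎 K} : x ∈ frobPowFixed p K n ↔ frobPow p K n x = x :=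
  Iff.rfl

theorem mem_frobPowFixed_iff_coeff {n : ℕ} {x : 𝕎 K} :
    x ∈ frobPowFixed p K n ↔ ∀ i, x.coeff i ^ p ^ n = x.coeff i := by
  simp only [mem_frobPowFixed, WittVector.ext_iff, coeff_frobPow]

end Frobenius

section WittMap

variable {K K' : Type*} [CommRing K] [CommRing K']

variable [Algebra (ZMod p) K] [Algebra (ZMod p) K']

def wittMapAlgHom (ι : K' →ₐ[ZMod p] K) : 𝕎 K' →ₐ[ℤ_[p]] 𝕎 K :=
  { WittVector.map (ι : K' →+* K) with
    commutes' := fun _ => WittVector.ext fun i =>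
      (WittVector.map_coeff _ _ i).trans (ι.commutes _) }

variable [CharP K p]

theorem range_wittMapAlgHom {m : ℕ} (ι : K' →ₐ[ZMod p] K)
    (hι : ∀ y : K, y ^ p ^ m = y ↔ y ∈ Set.range ι) :
    LinearMap.range (wittMapAlgHom p ι).toLinearMap = frobPowFixed p K m := by
  ext x
  rw [mem_frobPowFixed_iff_coeff]
  simp only [hι]
  exact WittVector.mem_range_map_iff (ι : K' →+* K) x

end WittMap

section Exponents

variable (e : ℕ → ℕ)

theorem altSum_one_zero : altSum e 1 0 = 0 := by
  simp [altSum]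

theorem altSum_one_succ (ℓ : ℕ) :
    altSum e 1 (ℓ + 1) = altSum e 1 ℓ + (-1) ^ ℓ * e (ℓ + 1) := by
  rw [altSum, Finset.sum_Icc_succ_top (by omega), Nat.add_sub_cancel]
  rfl

-- `toNat` loses nothing under the hypothesis `0 ≤ A_ℓ` of the theorem.
def evenAltSum (n : ℕ) : ℕ := (altSum e 1 (2 * n)).toNat

def evenPartialSum (n : ℕ) : ℕ := ∑ i ∈ Finset.Icc 1 (2 * n), e i

theorem evenPartialSum_succ (n : ℕ) :
    evenPartialSum e (n + 1) = (e (2 * n + 1) + e (2 * n + 2)) + evenPartialSum e n := by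
  rw [evenPartialSum, evenPartialSum, show 2 * (n + 1) = 2 * n + 1 + 1 by ring,
    Finset.sum_Icc_succ_top (by omega), Finset.sum_Icc_succ_top (by omega)]
  ring

theorem evenAltSum_step {n : ℕ} (h₀ : 0 ≤ altSum e 1 (2 * n))
    (h₁ : 0 ≤ altSum e 1 (2 * (n + 1))) :
    e (2 * n + 1) + evenAltSum e n = e (2 * n + 2) + evenAltSum e (n + 1) := by
  have hsucc : altSum e 1 (2 * (n + 1)) = altSum e 1 (2 * n) + e (2 * n + 1) - e (2 * n + 2) := by
    rw [show 2 * (n + 1) = 2 * n + 1 + 1 by ring, altSum_one_succ, altSum_one_succ,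
      (even_two_mul n).neg_one_pow, (even_two_mul n).add_one.neg_one_pow]
    ring
  simp only [evenAltSum]
  omega

variable {e} {k : ℕ}

theorem altSum_two_mul_nonneg (hA : ∀ ℓ, 1 ≤ ℓ → ℓ ≤ 2 * k → 0 ≤ altSum e 1 ℓ) {n : ℕ}
    (hn : n ≤ k) : 0 ≤ altSum e 1 (2 * n) := by
  rcases n.eq_zero_or_pos with rfl | hn₀
  · exact (altSum_one_zero e).ge
  · exact hA _ (by omega) (by omega)

end Exponents

section Solutions

variable {K : Type*} [CommRing K] [CharP K p] [Algebra (ZMod p) K] (e : ℕ → ℕ) (k' : ℕ)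

def solutionCoord (n : ℕ) : 𝕎 K →ₗ[ℤ_[p]] 𝕎 K :=
  LinearMap.mulLeft ℤ_[p] ((p : 𝕎 K) ^ evenAltSum e n) ∘ₗ
    (frobPowAlgHom p K (evenPartialSum e n)).toLinearMap

theorem solutionCoord_apply (n : ℕ) (x : 𝕎 K) :
    solutionCoord p e n x = (p : 𝕎 K) ^ evenAltSum e n * frobPow p K (evenPartialSum e n) x :=
  rfl

theorem solutionCoord_zero (x : 𝕎 K) : solutionCoord p e 0 x = x := by
  simp [solutionCoord_apply, evenAltSum, evenPartialSum, altSum_one_zero, frobPow]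

def solutionTuple : 𝕎 K →ₗ[ℤ_[p]] (Fin (k' + 1) → 𝕎 K) :=
  LinearMap.pi fun j => solutionCoord p e j

theorem solutionTuple_apply (x : 𝕎 K) (j : Fin (k' + 1)) :
    solutionTuple p e k' x j = solutionCoord p e j x :=
  rfl

theorem solutionTuple_apply_zero (x : 𝕎 K) : solutionTuple p e k' x 0 = x :=
  solutionCoord_zero p e x

theorem solutionTuple_injective : Function.Injective (solutionTuple p e k' : 𝕎 K → _) :=
  fun x y h => by simpa only [solutionTuple_apply_zero] using congrFun h 0

variable (K) in
def solutionModule (m : ℕ) : Submodule ℤ_[p] (Fin (k' + 1) → 𝕎 K) :=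
  (frobPowFixed p K m).map (solutionTuple p e k')

variable {p e k'}

theorem injOn_apply_zero_solutionModule (m : ℕ) :
    Set.InjOn (fun β : Fin (k' + 1) → 𝕎 K => β 0) (solutionModule p K e k' m) := by
  rintro _ ⟨x, -, rfl⟩ _ ⟨y, -, rfl⟩ h
  simp only [solutionTuple_apply_zero] at h
  rw [h]

theorem image_apply_zero_solutionModule (m : ℕ) :
    (fun β : Fin (k' + 1) → 𝕎 K => β 0) '' solutionModule p K e k' m
      = {x | frobPow p K m x = x} := by
  ext x
  constructor
  · rintro ⟨_, ⟨y, hy, rfl⟩, rfl⟩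
    simpa only [Set.mem_ofPred_eq, solutionTuple_apply_zero, SetLike.mem_coe, mem_frobPowFixed]
      using hy
  · exact fun hx => ⟨solutionTuple p e k' x, ⟨x, hx, rfl⟩, solutionTuple_apply_zero p e k' x⟩

theorem solutionCoord_step (hA : ∀ ℓ, 1 ≤ ℓ → ℓ ≤ 2 * (k' + 1) → 0 ≤ altSum e 1 ℓ) {n : ℕ}
    (hn : n ≤ k') (x : 𝕎 K) :
    (p : 𝕎 K) ^ e (2 * n + 1) *
        frobPow p K (e (2 * n + 1) + e (2 * n + 2)) (solutionCoord p e n x)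
      = (p : 𝕎 K) ^ e (2 * n + 2) * solutionCoord p e (n + 1) x := by
  have hexp := evenAltSum_step e (altSum_two_mul_nonneg hA (n := n) (by omega))
    (altSum_two_mul_nonneg hA (n := n + 1) (by omega))
  rw [solutionCoord_apply, solutionCoord_apply, map_mul, map_pow, map_natCast, ← frobPow_add,
    ← evenPartialSum_succ, ← mul_assoc, ← pow_add, hexp, pow_add, mul_assoc]

theorem solutionCoord_last {m : ℕ} (hA0 : altSum e 1 (2 * (k' + 1)) = 0)
    (hm : m = ∑ i ∈ Finset.Icc 1 (2 * (k' + 1)), e i) (x : 𝕎 K) :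
    solutionCoord p e (k' + 1) x = frobPow p K m x := by
  simp [solutionCoord_apply, evenAltSum, hA0, evenPartialSum, hm]

open Fin.NatCast in
theorem mem_solutionModule_iff [IsDomain K] {m : ℕ}
    (hA : ∀ ℓ, 1 ≤ ℓ → ℓ ≤ 2 * (k' + 1) → 0 ≤ altSum e 1 ℓ)
    (hA0 : altSum e 1 (2 * (k' + 1)) = 0) (hm : m = ∑ i ∈ Finset.Icc 1 (2 * (k' + 1)), e i)
    (β : Fin (k' + 1) → 𝕎 K) :
    β ∈ solutionModule p K e k' m ↔ ∀ j : Fin (k' + 1),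
      (p : 𝕎 K) ^ e (2 * (j : ℕ) + 1) *
          frobPow p K (e (2 * (j : ℕ) + 1) + e (2 * (j : ℕ) + 2)) (β j)
        = (p : 𝕎 K) ^ e (2 * (j : ℕ) + 2) * β (j + 1) := by
  refine Iff.trans ?_ (Fin.forall_apply_add_one_iff β fun n y z =>
    (p : 𝕎 K) ^ e (2 * n + 1) * frobPow p K (e (2 * n + 1) + e (2 * n + 2)) y
      = (p : 𝕎 K) ^ e (2 * n + 2) * z).symm
  constructor
  · rintro ⟨x, hx, rfl⟩ n hn
    have hcoord (i : ℕ) (hi : i ≤ k' + 1) :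
        solutionTuple p e k' x (i : Fin (k' + 1)) = solutionCoord p e i x := by
      rcases hi.lt_or_eq with hi | rfl
      · rw [solutionTuple_apply, Fin.val_cast_of_lt hi]
      · rw [Fin.natCast_self, solutionTuple_apply_zero, solutionCoord_last hA0 hm,
          (mem_frobPowFixed p).mp hx]
    rw [hcoord n (by omega), hcoord (n + 1) (by omega)]
    exact solutionCoord_step hA hn x
  · intro h
    -- `p` is a non-zero-divisor in `W(K)`, so each equation determines the next coordinate.
    have hseq (n : ℕ) (hn : n ≤ k' + 1) : β (n : Fin (k' + 1)) = solutionCoord p e n (β 0) := by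
      induction n with
      | zero => rw [solutionCoord_zero, Nat.cast_zero]
      | succ n ih =>
        refine mul_left_cancel₀ (pow_ne_zero (e (2 * n + 2)) (WittVector.p_nonzero p K)) ?_
        rw [← h n (by omega), ← solutionCoord_step hA (by omega), ih (by omega)]
    refine ⟨β 0, ?_, funext fun j => ?_⟩
    · rw [SetLike.mem_coe, mem_frobPowFixed, ← solutionCoord_last hA0 hm,
        ← hseq (k' + 1) le_rfl, Fin.natCast_self]
    · simpa [solutionTuple_apply] using (hseq j (by omega)).symm

end Solutions

end BasicEquations

open BasicEquations

theorem basic_equations_adic_solutions_general (p r k' : ℕ) [Fact p.Prime]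
    (hr : 0 < r) (e : ℕ → ℕ)
    (hA : ∀ ℓ, 1 ≤ ℓ → ℓ ≤ 2 * (k' + 1) → 0 ≤ altSum e 1 ℓ)
    (hA0 : altSum e 1 (2 * (k' + 1)) = 0)
    (m : ℕ) (hm : m = ∑ i ∈ Finset.Icc 1 (2 * (k' + 1)), e i) (hmr : m ∣ r) :
    ∃ M : Submodule ℤ_[p] (Fin (k' + 1) → WittVector p (GaloisField p r)),
      (M : Set (Fin (k' + 1) → WittVector p (GaloisField p r)))
          = {β | BasicEq p r k' e β} ∧
      Set.InjOn (fun β : Fin (k' + 1) → WittVector p (GaloisField p r) => β 0) M ∧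
      ((fun β : Fin (k' + 1) → WittVector p (GaloisField p r) => β 0) '' M
          = {x | frobPow p (GaloisField p r) m x = x}) ∧
      Nonempty (M ≃ₗ[ℤ_[p]] WittVector p (GaloisField p m)) := by
  have hm0 : m ≠ 0 := by
    rintro rfl
    exact hr.ne' (zero_dvd_iff.mp hmr)
  obtain ⟨ι⟩ : Nonempty (GaloisField p m →ₐ[ZMod p] GaloisField p r) :=
    FiniteField.nonempty_algHom_of_finrank_dvd
      (by rwa [GaloisField.finrank p hm0, GaloisField.finrank p hr.ne'])
  have hι (y : GaloisField p r) : y ^ p ^ m = y ↔ y ∈ Set.range ι := by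
    rw [← GaloisField.card p m hm0]
    exact FiniteField.pow_natCard_eq_self_iff_mem_range (ι : GaloisField p m →+* _) y
  refine ⟨solutionModule p _ e k' m, Set.ext (mem_solutionModule_iff hA hA0 hm),
    injOn_apply_zero_solutionModule m, image_apply_zero_solutionModule m, ⟨?_⟩⟩
  exact (Submodule.equivMapOfInjective _ (solutionTuple_injective p e k') _).symm ≪≫ₗ
    (LinearEquiv.ofEq _ _ (range_wittMapAlgHom p ι hι)).symm ≪≫ₗ
    (LinearEquiv.ofInjective _ (WittVector.map_injective _ ι.injective)).symm

/-- the set `S` of solutions of the basic equations in `W^k` is a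
`ℤ_p`-submodule, projection to the coordinate `β_0` is injective on `S`, its image is
exactly the fixed set `{x ∈ W : σ^m(x) = x}`, and `S` is isomorphic as a `ℤ_p`-module
to `W(𝔽_(p^m))`. -/
theorem basic_equations_adic_solutions (p r k' : ℕ) [Fact p.Prime] (hp : Odd p)
    (hr : 0 < r) (e : ℕ → ℕ)
    (he : ∀ i, 1 ≤ i → i ≤ 2 * (k' + 1) → 0 < e i)
    (hA : ∀ ℓ, 1 ≤ ℓ → ℓ ≤ 2 * (k' + 1) → 0 ≤ altSum e 1 ℓ)
    (hA0 : altSum e 1 (2 * (k' + 1)) = 0)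
    (m : ℕ) (hm : m = ∑ i ∈ Finset.Icc 1 (2 * (k' + 1)), e i) (hmr : m ∣ r) :
    ∃ M : Submodule ℤ_[p] (Fin (k' + 1) → WittVector p (GaloisField p r)),
      (M : Set (Fin (k' + 1) → WittVector p (GaloisField p r)))
          = {β | BasicEq p r k' e β} ∧
      Set.InjOn (fun β : Fin (k' + 1) → WittVector p (GaloisField p r) => β 0) M ∧
      ((fun β : Fin (k' + 1) → WittVector p (GaloisField p r) => β 0) '' M
          = {x | frobPow p (GaloisField p r) m x = x}) ∧
      Nonempty (M ≃ₗ[ℤ_[p]] WittVector p (GaloisField p m)) :=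
  basic_equations_adic_solutions_general p r k' hr e hA hA0 m hm hmr

end
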